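/- Let P be a strong Feller Markov kernel on a Polish space X. If there exists a point x ∈ X such that x belongs to the topological support of every invariant probability measure for P, then P has at most one invariant probability measure. -/

import Mathlib

open MeasureTheory ProbabilityTheory Filter
open scoped ENNReal

/-- A Markov kernel is *strong Feller* if it maps bounded measurable functions to
continuous functions. -/
def StrongFeller {X : Type*} [MeasurableSpace X] [TopologicalSpace X] (P : Kernel X X) : Prop :=
  ∀ f : X → ℝ, Measurable f → (∃ C, ∀ x, |f x| ≤ C) →
    Continuous fun x => ∫ y, f y ∂(P x)

/-- The topological support of a measure: the set of points all of whose neighbourhoods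
have positive measure (equivalently, the smallest closed set of full measure). -/
def msupport {X : Type*} [TopologicalSpace X] [MeasurableSpace X]
    (μ : Measure X) : Set X :=
  {x | ∀ U ∈ nhds x, 0 < μ U}

/-- A measure `μ` is invariant for the kernel `P` if `∫ P(x,·) μ(dx) = μ`. -/
def Invariant {X : Type*} [MeasurableSpace X] (P : Kernel X X) (μ : Measure X) : Prop :=
  μ.bind (fun x => P x) = μ

/-!
If `μ ≠ ν` are invariant, the positive and negative parts `μ - ν` and `ν - μ` of the signed
measure `μ - ν` are invariant as well, and after normalisation they are mutually singular
invariant probability measures `ρ₁, ρ₂`: there is a measurable `S` with `ρ₁ S = 0` and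
`ρ₂ Sᶜ = 0`. By invariance `P(z, S) = 0` for `ρ₁`-a.e. `z` and `P(z, S) = 1` for `ρ₂`-a.e. `z`.
The strong Feller property makes `z ↦ P(z, S)` continuous, so it takes the value `0` on the
support of `ρ₁` and the value `1` on the support of `ρ₂`; hence no point lies in both supports.
-/

namespace MeasureTheory.Measure

variable {X : Type*} [MeasurableSpace X] {μ ν : Measure X} [IsFiniteMeasure μ] [IsFiniteMeasure ν]

theorem add_sub_eq_add_sub_rev : μ + (ν - μ) = ν + (μ - ν) := by
  rw [← toSignedMeasure_eq_toSignedMeasure_iff, toSignedMeasure_add, toSignedMeasure_add]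
  have := sub_toSignedMeasure_eq_toSignedMeasure_sub (μ := μ) (ν := ν)
  linear_combination (norm := abel) this

theorem sub_eq_zero_iff_le : μ - ν = 0 ↔ μ ≤ ν := by
  refine ⟨fun h => ?_, sub_eq_zero_of_le⟩
  calc μ ≤ μ + (ν - μ) := Measure.le_add_right le_rfl
    _ = ν := by rw [add_sub_eq_add_sub_rev, h, add_zero]

end MeasureTheory.Measure

section Invariant

variable {X : Type*} [MeasurableSpace X] {P : Kernel X X} {μ ν : Measure X}

theorem Invariant.comp_eq (hμ : Invariant P μ) : P ∘ₘ μ = μ := hμ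

theorem Invariant.smul (hμ : Invariant P μ) (c : ℝ≥0∞) : Invariant P (c • μ) := by
  rw [Invariant, Measure.comp_smul, hμ.comp_eq]

theorem Invariant.sub [IsMarkovKernel P] [IsFiniteMeasure μ] [IsFiniteMeasure ν]
    (hμ : Invariant P μ) (hν : Invariant P ν) : Invariant P (μ - ν) := by
  have hcomp : μ + P ∘ₘ (ν - μ) = ν + P ∘ₘ (μ - ν) := by
    simpa only [Measure.comp_add, hμ.comp_eq, hν.comp_eq] using
      congrArg (P ∘ₘ ·) (Measure.add_sub_eq_add_sub_rev (μ := μ) (ν := ν))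
  have hle : μ - ν ≤ P ∘ₘ (μ - ν) := by
    refine Measure.sub_le_of_le_add ?_
    calc μ ≤ μ + P ∘ₘ (ν - μ) := Measure.le_add_right le_rfl
      _ = P ∘ₘ (μ - ν) + ν := by rw [hcomp, add_comm]
  exact (Measure.eq_of_le_of_measure_univ_eq hle (by simp)).symm

theorem Invariant.ae_eq_zero_of_measure_eq_zero (hμ : Invariant P μ) {S : Set X}
    (hS : MeasurableSet S) (hμS : μ S = 0) : ∀ᵐ z ∂μ, P z S = 0 := by
  rw [← hμ, Measure.bind_apply hS P.aemeasurable] at hμS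
  exact (lintegral_eq_zero_iff (P.measurable_coe hS)).1 hμS

theorem exists_mutuallySingular_invariant_of_ne [IsMarkovKernel P]
    [IsProbabilityMeasure μ] [IsProbabilityMeasure ν]
    (hμ : Invariant P μ) (hν : Invariant P ν) (hne : μ ≠ ν) :
    ∃ ρ₁ ρ₂ : Measure X, IsProbabilityMeasure ρ₁ ∧ IsProbabilityMeasure ρ₂ ∧
      Invariant P ρ₁ ∧ Invariant P ρ₂ ∧ ρ₁ ⟂ₘ ρ₂ := by
  have : NeZero (μ - ν) :=
    ⟨fun h => hne (Measure.eq_of_le_of_isProbabilityMeasure (Measure.sub_eq_zero_iff_le.1 h))⟩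
  have : NeZero (ν - μ) :=
    ⟨fun h => hne (Measure.eq_of_le_of_isProbabilityMeasure (Measure.sub_eq_zero_iff_le.1 h)).symm⟩
  exact ⟨((μ - ν) .univ)⁻¹ • (μ - ν), ((ν - μ) .univ)⁻¹ • (ν - μ), inferInstance, inferInstance,
    (hμ.sub hν).smul _, (hν.sub hμ).smul _,
    ((Measure.mutually_singular_measure_sub.smul _).symm.smul _).symm⟩

end Invariant

section StrongFeller

variable {X : Type*} [TopologicalSpace X] [MeasurableSpace X] {P : Kernel X X}

theorem Continuous.eq_of_ae_eq_of_mem_msupport {Y : Type*} [TopologicalSpace Y] [T1Space Y]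
    {f : X → Y} (hf : Continuous f) {μ : Measure X} {c : Y} (h : ∀ᵐ z ∂μ, f z = c) {x : X}
    (hx : x ∈ msupport μ) : f x = c := by
  by_contra hfx
  exact (hx _ ((isClosed_singleton.preimage hf).isOpen_compl.mem_nhds hfx)).ne' (ae_iff.1 h)

theorem StrongFeller.continuous_measureReal (hP : StrongFeller P)
    {S : Set X} (hS : MeasurableSet S) : Continuous fun z => (P z).real S := by
  simpa [integral_indicator_one hS] using
    hP _ (measurable_one.indicator hS) ⟨1, fun z => by by_cases h : z ∈ S <;> simp [h]⟩

theorem StrongFeller.disjoint_msupport_of_mutuallySingular [IsMarkovKernel P]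
    (hP : StrongFeller P) {ρ₁ ρ₂ : Measure X} (h₁ : Invariant P ρ₁) (h₂ : Invariant P ρ₂)
    (h : ρ₁ ⟂ₘ ρ₂) : Disjoint (msupport ρ₁) (msupport ρ₂) := by
  obtain ⟨S, hS, hρ₁S, hρ₂S⟩ := h
  have hf := hP.continuous_measureReal hS
  refine Set.disjoint_left.2 fun x hx₁ hx₂ => ?_
  have hzero : (P x).real S = 0 := hf.eq_of_ae_eq_of_mem_msupport
    ((h₁.ae_eq_zero_of_measure_eq_zero hS hρ₁S).mono fun z hz => by simp [measureReal_def, hz])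
    hx₁
  have hone : (P x).real S = 1 := hf.eq_of_ae_eq_of_mem_msupport
    ((h₂.ae_eq_zero_of_measure_eq_zero hS.compl hρ₂S).mono fun z hz => by
      simp [measureReal_def, (prob_compl_eq_zero_iff hS).1 hz]) hx₂
  exact zero_ne_one (hzero.symm.trans hone)

end StrongFeller

theorem unique_invariant_of_common_support_point_general
    {X : Type*} [TopologicalSpace X] [MeasurableSpace X]
    (P : Kernel X X) [IsMarkovKernel P] (hP : StrongFeller P)
    (hx : ∃ x : X, ∀ μ : Measure X, IsProbabilityMeasure μ → Invariant P μ → x ∈ msupport μ)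
    (μ ν : Measure X) [IsProbabilityMeasure μ] [IsProbabilityMeasure ν]
    (hμ : Invariant P μ) (hν : Invariant P ν) :
    μ = ν := by
  obtain ⟨x, hx⟩ := hx
  by_contra hne
  obtain ⟨ρ₁, ρ₂, hρ₁, hρ₂, h₁, h₂, hsing⟩ := exists_mutuallySingular_invariant_of_ne hμ hν hne
  exact Set.disjoint_left.1 (hP.disjoint_msupport_of_mutuallySingular h₁ h₂ hsing)
    (hx ρ₁ hρ₁ h₁) (hx ρ₂ hρ₂ h₂)

/-- Let `P` be a strong Feller Markov kernel on a Polish space `X`. If there exists a point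
`x ∈ X` belonging to the topological support of every invariant probability measure for `P`,
then `P` has at most one invariant probability measure. -/
theorem unique_invariant_of_common_support_point
    {X : Type*} [TopologicalSpace X] [PolishSpace X] [MeasurableSpace X] [BorelSpace X]
    (P : Kernel X X) [IsMarkovKernel P] (hP : StrongFeller P)
    (hx : ∃ x : X, ∀ μ : Measure X, IsProbabilityMeasure μ → Invariant P μ → x ∈ msupport μ)
    (μ ν : Measure X) [IsProbabilityMeasure μ] [IsProbabilityMeasure ν]
    (hμ : Invariant P μ) (hν : Invariant P ν) :
    μ = ν :=
  unique_invariant_of_common_support_point_general P hP hx μ ν hμ hν
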